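/- Let P_n be the path graph with vertices v_1, v_2, …, v_n (v_j adjacent to v_{j+1}), given the initial Toggle assignment in which the vertices of weight 1 are exactly v_{m_1}, v_{m_1+1}, …, v_{m_2} for some 1 ≤ m_1 < m_2 ≤ n, and all other vertices have weight 0. Then this position on P_n is penultimately unplayable. -/

import Mathlib

namespace Toggle

variable {V : Type*} [Fintype V] [DecidableEq V]

/-- The closed neighborhood `N[v]` of a vertex as a `Finset`. -/
def closedNbhd (G : SimpleGraph V) [DecidableRel G.Adj] (v : V) : Finset V :=
  insert v (G.neighborFinset v)

/-- The result of a Toggle move at `v`: flip the weight of every vertex in `N[v]`. -/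
def move (G : SimpleGraph V) [DecidableRel G.Adj] (ω : V → Bool) (v : V) : V → Bool :=
  fun u => if u ∈ closedNbhd G v then !(ω u) else ω u

/-- Total weight of a position. -/
def weight (ω : V → Bool) : ℕ := (Finset.univ.filter (fun u => ω u = true)).card

/-- Weight of a position over the closed neighborhood of `v`. -/
def nbhdWeight (G : SimpleGraph V) [DecidableRel G.Adj] (ω : V → Bool) (v : V) : ℕ :=
  ((closedNbhd G v).filter (fun u => ω u = true)).card

/-- A Toggle move at `v` is legal iff `ω v = 1` and the move strictly decreases the
weight over `N[v]`. -/
def IsLegal (G : SimpleGraph V) [DecidableRel G.Adj] (ω : V → Bool) (v : V) : Prop :=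
  ω v = true ∧ nbhdWeight G (move G ω v) v < nbhdWeight G ω v

instance (G : SimpleGraph V) [DecidableRel G.Adj] (ω : V → Bool) (v : V) :
    Decidable (IsLegal G ω v) :=
  inferInstanceAs (Decidable (ω v = true ∧ nbhdWeight G (move G ω v) v < nbhdWeight G ω v))

theorem weight_move_lt (G : SimpleGraph V) [DecidableRel G.Adj] {ω : V → Bool} {v : V}
    (h : IsLegal G ω v) : weight (move G ω v) < weight ω := by
  have key : ∀ ψ : V → Bool,
      weight ψ = ((closedNbhd G v).filter (fun u => ψ u = true)).card
        + ((Finset.univ \ closedNbhd G v).filter (fun u => ψ u = true)).card := by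
    intro ψ
    rw [weight, ← Finset.card_union_of_disjoint
      (Finset.disjoint_filter_filter Finset.disjoint_sdiff)]
    congr 1
    ext u
    simp only [Finset.mem_filter, Finset.mem_union, Finset.mem_sdiff, Finset.mem_univ,
      true_and]
    tauto
  have hout : ((Finset.univ \ closedNbhd G v).filter (fun u => move G ω v u = true))
      = ((Finset.univ \ closedNbhd G v).filter (fun u => ω u = true)) := by
    apply Finset.filter_congr
    intro u hu
    rw [Finset.mem_sdiff] at hu
    simp [move, hu.2]
  have h2 := h.2
  rw [key (move G ω v), key ω, hout]
  unfold nbhdWeight at h2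
  omega

/-- Minimal excludant of a finite set of naturals. -/
noncomputable def mex (s : Finset ℕ) : ℕ := sInf {n : ℕ | n ∉ s}

/-- The Nimber (Grundy value) of a Toggle position. -/
noncomputable def grundy (G : SimpleGraph V) [DecidableRel G.Adj] (ω : V → Bool) : ℕ :=
  mex ((Finset.univ.filter (fun v => IsLegal G ω v)).attach.image
    (fun v => grundy G (move G ω v.1)))
termination_by weight ω
decreasing_by
  have hv := v.2
  rw [Finset.mem_filter] at hv
  exact weight_move_lt G hv.2

/-- One legal Toggle move transforms `ω` into `ω'`. -/
def Step (G : SimpleGraph V) [DecidableRel G.Adj] (ω ω' : V → Bool) : Prop :=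
  ∃ v, IsLegal G ω v ∧ ω' = move G ω v

/-- `ω'` is reachable from `ω` by a (possibly empty) sequence of legal moves. -/
def Reach (G : SimpleGraph V) [DecidableRel G.Adj] (ω ω' : V → Bool) : Prop :=
  Relation.ReflTransGen (Step G) ω ω'

/-- `v` is terminally unplayable at `ω`: unplayable at `ω` and at every position
reachable from `ω`. -/
def TerminallyUnplayable (G : SimpleGraph V) [DecidableRel G.Adj] (ω : V → Bool) (v : V) :
    Prop :=
  ∀ ω', Reach G ω ω' → ¬ IsLegal G ω' v

/-- `v` is penultimately unplayable for the initial position `ω₀`: at every position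
reachable from `ω₀`, after any legal move at a vertex `u ∈ N[v]`, the vertex `v` is
terminally unplayable. -/
def PenultimatelyUnplayableAt (G : SimpleGraph V) [DecidableRel G.Adj] (ω₀ : V → Bool)
    (v : V) : Prop :=
  ∀ ω', Reach G ω₀ ω' → ∀ u ∈ closedNbhd G v, IsLegal G ω' u →
    TerminallyUnplayable G (move G ω' u) v

/-- The position `ω₀` is penultimately unplayable if every vertex is. -/
def PenultimatelyUnplayable (G : SimpleGraph V) [DecidableRel G.Adj] (ω₀ : V → Bool) :
    Prop :=
  ∀ v, PenultimatelyUnplayableAt G ω₀ v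

/-- The path graph on `Fin n`, vertices `0, 1, …, n-1` in order. -/
def pathGraph (n : ℕ) : SimpleGraph (Fin n) :=
  SimpleGraph.fromRel (fun a b => (a : ℕ) + 1 = (b : ℕ))

instance (n : ℕ) : DecidableRel (pathGraph n).Adj := fun a b =>
  decidable_of_iff _ (SimpleGraph.fromRel_adj _ a b).symm

/-- The 2×m grid graph `L_{2,m}` (0-indexed rows and columns). -/
def gridGraph (m : ℕ) : SimpleGraph (Fin 2 × Fin m) :=
  SimpleGraph.fromRel (fun a b =>
    (a.1 = b.1 ∧ (a.2 : ℕ) + 1 = (b.2 : ℕ)) ∨ (a.2 = b.2 ∧ (a.1 : ℕ) + 1 = (b.1 : ℕ)))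

instance (m : ℕ) : DecidableRel (gridGraph m).Adj := fun a b =>
  decidable_of_iff _ (SimpleGraph.fromRel_adj _ a b).symm

/-- The generalized Petersen graph `P(m,k)`; the vertex `(0, i)` is the outer vertex
`u_i` and `(1, i)` is the inner vertex `w_i` (0-indexed). -/
def petersen (m k : ℕ) : SimpleGraph (Fin 2 × Fin m) :=
  SimpleGraph.fromRel (fun a b =>
    (a.1 = 0 ∧ b.1 = 0 ∧ ((a.2 : ℕ) + 1) % m = (b.2 : ℕ)) ∨
    (a.1 = 0 ∧ b.1 = 1 ∧ a.2 = b.2) ∨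
    (a.1 = 1 ∧ b.1 = 1 ∧ ((a.2 : ℕ) + k) % m = (b.2 : ℕ)))

instance (m k : ℕ) : DecidableRel (petersen m k).Adj := fun a b =>
  decidable_of_iff _ (SimpleGraph.fromRel_adj _ a b).symm

/-- The position on `P(m,k)` where every outer vertex has weight 1 and every inner
vertex has weight 0. -/
def P01 (m : ℕ) : Fin 2 × Fin m → Bool := fun p => decide (p.1 = 0)

/-- The position on `P(m,k)` where every inner vertex has weight 1 and every outer
vertex has weight 0. -/
def P10 (m : ℕ) : Fin 2 × Fin m → Bool := fun p => decide (p.1 = 1)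

/-- The position where every vertex has weight 1. -/
def P11 (m : ℕ) : Fin 2 × Fin m → Bool := fun _ => true

/-- The Toggle position `H_m` on `L_{2,m}` (columns 0-indexed): for `m ≠ 3`, weight 0
exactly at `(0,0), (0,m-1), (1,0), (1,1), (1,m-2), (1,m-1)`; for `m = 3`, weight 0
exactly at `(0,0), (0,2), (1,0), (1,2)`. -/
def Hpos (m : ℕ) : Fin 2 × Fin m → Bool := fun p =>
  if m = 3 then !(decide ((p.2 : ℕ) = 0 ∨ (p.2 : ℕ) = 2))
  else !(decide ((p.1 = 0 ∧ ((p.2 : ℕ) = 0 ∨ (p.2 : ℕ) = m - 1)) ∨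
                 (p.1 = 1 ∧ ((p.2 : ℕ) ≤ 1 ∨ m - 2 ≤ (p.2 : ℕ)))))

/-- The Toggle position `D_m` on `L_{2,m}` (columns 0-indexed): weight 0 exactly at
`(0,0), (0,m-2), (0,m-1), (1,0), (1,1), (1,m-1)`. -/
def Dpos (m : ℕ) : Fin 2 × Fin m → Bool := fun p =>
  !(decide ((p.1 = 0 ∧ ((p.2 : ℕ) = 0 ∨ m - 2 ≤ (p.2 : ℕ))) ∨
            (p.1 = 1 ∧ ((p.2 : ℕ) ≤ 1 ∨ (p.2 : ℕ) = m - 1))))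

/-- The Nimber of the position `H_m`. -/
noncomputable def GH (m : ℕ) : ℕ := grundy (gridGraph m) (Hpos m)

/-- The Nimber of the position `D_m`. -/
noncomputable def GD (m : ℕ) : ℕ := grundy (gridGraph m) (Dpos m)

/-- The cycle graph `C_m` on `Fin m`. -/
def cycleGraph (m : ℕ) : SimpleGraph (Fin m) :=
  SimpleGraph.fromRel (fun a b => ((a : ℕ) + 1) % m = (b : ℕ))

open scoped Classical in
/-- The Nimber of a position of Jacob's Ladder on `C_m`: a position is the `Finset` of
not-yet-removed vertices, and a move at a remaining vertex `v` removes all remaining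
vertices at distance at most 2 from `v` in `C_m`. -/
noncomputable def jlGrundy (m : ℕ) (S : Finset (Fin m)) : ℕ :=
  mex (S.attach.image (fun v =>
    jlGrundy m (S.filter (fun u => 2 < (cycleGraph m).dist v.1 u))))
termination_by S.card
decreasing_by
  apply Finset.card_lt_card
  rw [Finset.ssubset_iff_of_subset (Finset.filter_subset _ _)]
  exact ⟨v.1, v.2, by simp [SimpleGraph.dist_self]⟩

end Toggle

/-!
The vertices of weight 1 form maximal runs, and on a path with at least two vertices a move at
`u` is legal only if `u` lies in a run of length at least two. We follow the game on the
integer line, into which the path embeds: a move at an end vertex of the path then also flips a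
cell outside it, which is harmless because only "legal on the path ⇒ playable on the line" is
ever used. Starting from a single run, every reachable line position is `Separated`, and under
this invariant a move never makes an unplayable cell playable, while it leaves all three cells
it flips unplayable. So once a move has been made in `N[v]`, the vertex `v` stays unplayable.
-/

namespace Toggle

section Graph

variable {V : Type*} [Fintype V] [DecidableEq V] {G : SimpleGraph V} [DecidableRel G.Adj]
  {ω : V → Bool} {v : V}

theorem mem_closedNbhd {x : V} : x ∈ closedNbhd G v ↔ x = v ∨ G.Adj v x := by
  simp [closedNbhd]

theorem nbhdWeight_move :
    nbhdWeight G (move G ω v) v = (closedNbhd G v).card - nbhdWeight G ω v := by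
  rw [nbhdWeight, nbhdWeight, ← Finset.card_sdiff_of_subset (Finset.filter_subset _ _)]
  congr 1
  ext x
  by_cases hx : x ∈ closedNbhd G v <;> simp [move, hx]

theorem exists_adj_of_isLegal {x : V} (h : IsLegal G ω v) (hx : G.Adj v x) :
    ∃ u, G.Adj v u ∧ ω u = true := by
  have hcard : 2 ≤ (closedNbhd G v).card := by
    rw [closedNbhd, Finset.card_insert_of_notMem (by simp)]
    have : 0 < (G.neighborFinset v).card := Finset.card_pos.2 ⟨x, by simpa using hx⟩
    omega
  have hweight : 1 < nbhdWeight G ω v := by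
    have := h.2
    rw [nbhdWeight_move] at this
    omega
  obtain ⟨u, hu, huv⟩ := Finset.exists_mem_ne hweight v
  rw [Finset.mem_filter, mem_closedNbhd] at hu
  exact ⟨u, hu.1.resolve_left huv, hu.2⟩

end Graph

section Path

variable {n : ℕ}

theorem pathGraph_adj {a b : Fin n} :
    (pathGraph n).Adj a b ↔ (a : ℕ) + 1 = b ∨ (b : ℕ) + 1 = a := by
  rw [pathGraph, SimpleGraph.fromRel_adj]
  exact ⟨And.right, fun h => ⟨fun hab => by subst hab; omega, h⟩⟩

theorem mem_closedNbhd_pathGraph {i v : Fin n} :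
    i ∈ closedNbhd (pathGraph n) v ↔
      ((v : ℕ) : ℤ) - 1 ≤ (i : ℕ) ∧ ((i : ℕ) : ℤ) ≤ (v : ℕ) + 1 := by
  rw [mem_closedNbhd, pathGraph_adj, Fin.ext_iff]
  omega

theorem exists_adj_pathGraph (hn : 2 ≤ n) (v : Fin n) : ∃ x, (pathGraph n).Adj v x := by
  by_cases hv : (v : ℕ) + 1 < n
  · exact ⟨⟨v + 1, hv⟩, pathGraph_adj.2 (Or.inl rfl)⟩
  · exact ⟨⟨v - 1, by omega⟩, pathGraph_adj.2 (Or.inr (by simp; omega))⟩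

end Path

namespace Line

def move (w : ℤ → Bool) (u : ℤ) : ℤ → Bool :=
  fun i => if u - 1 ≤ i ∧ i ≤ u + 1 then !w i else w i

def Playable (w : ℤ → Bool) (v : ℤ) : Prop :=
  w v = true ∧ (w (v - 1) = true ∨ w (v + 1) = true)

/-- A run of ones of length at least two is separated from any other run by at least two
zeros, and from another run of length at least two by at least three. -/
structure Separated (w : ℤ → Bool) : Prop where
  no_1101 : ∀ i, w i = true → w (i + 1) = true → w (i + 2) = false → w (i + 3) = true → False
  no_1011 : ∀ i, w i = true → w (i + 1) = false → w (i + 2) = true → w (i + 3) = true → False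
  no_110011 : ∀ i, w i = true → w (i + 1) = true → w (i + 2) = false → w (i + 3) = false →
    w (i + 4) = true → w (i + 5) = true → False

variable {w : ℤ → Bool}

theorem move_of_far {u j : ℤ} (h : j < u - 1 ∨ u + 1 < j) : move w u j = w j := by
  simp only [move]
  rw [if_neg (by omega)]

theorem separated_interval (a b : ℤ) : Separated (fun i => decide (a ≤ i ∧ i ≤ b)) where
  no_1101 i := by simp only [decide_eq_true_eq, decide_eq_false_iff_not]; omega
  no_1011 i := by simp only [decide_eq_true_eq, decide_eq_false_iff_not]; omega
  no_110011 i := by simp only [decide_eq_true_eq, decide_eq_false_iff_not]; omega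

theorem Separated.comp_add (hw : Separated w) (c : ℤ) : Separated (fun i => w (i + c)) where
  no_1101 i := by simpa only [add_right_comm] using hw.no_1101 (i + c)
  no_1011 i := by simpa only [add_right_comm] using hw.no_1011 (i + c)
  no_110011 i := by simpa only [add_right_comm] using hw.no_110011 (i + c)

theorem playable_comp_add {c v : ℤ} : Playable (fun i => w (i + c)) v ↔ Playable w (v + c) := by
  simp only [Playable, sub_add_eq_add_sub, add_right_comm]

theorem move_comp_add (c : ℤ) : move (fun i => w (i + c)) 0 = fun i => move w c (i + c) := by
  funext i
  simp only [move]
  congr 1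
  exact propext (by omega)

/-- After a move, no pair of adjacent ones meets the flipped cells. -/
theorem Separated.move_zero_adjacent_ones (hw : Separated w) (h0 : Playable w 0) {j : ℤ}
    (hj : move w 0 j = true) (hj1 : move w 0 (j + 1) = true) : j + 1 < -1 ∨ 1 < j := by
  by_contra hnear
  have := hw.no_1011 (-2)
  have := hw.no_1101 (-1)
  obtain ⟨h0, hnb⟩ := h0
  obtain rfl | rfl | rfl | rfl : j = -2 ∨ j = -1 ∨ j = 0 ∨ j = 1 := by omega
  all_goals simp_all [move]

theorem Separated.move_zero (hw : Separated w) (h0 : Playable w 0) : Separated (move w 0) where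
  no_1101 i h1 h2 h3 h4 := by
    obtain ⟨hw0, hnb⟩ := h0
    rcases hw.move_zero_adjacent_ones ⟨hw0, hnb⟩ h1 h2 with hleft | hright
    · obtain hfar | rfl | rfl : i + 3 < -1 ∨ i = -4 ∨ i = -3 := by omega
      · simp (disch := omega) only [move_of_far] at h1 h2 h3 h4
        exact hw.no_1101 i h1 h2 h3 h4
      · have := hw.no_110011 (-4)
        simp_all [move]
      · simp_all [move]
    · simp (disch := omega) only [move_of_far] at h1 h2 h3 h4
      exact hw.no_1101 i h1 h2 h3 h4
  no_1011 i h1 h2 h3 h4 := by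
    obtain ⟨hw0, hnb⟩ := h0
    rcases hw.move_zero_adjacent_ones ⟨hw0, hnb⟩ h3 (by rwa [add_assoc]) with hleft | hright
    · simp (disch := omega) only [move_of_far] at h1 h2 h3 h4
      exact hw.no_1011 i h1 h2 h3 h4
    · obtain hfar | rfl | rfl : 1 < i ∨ i = 0 ∨ i = 1 := by omega
      · simp (disch := omega) only [move_of_far] at h1 h2 h3 h4
        exact hw.no_1011 i h1 h2 h3 h4
      · simp_all [move]
      · have := hw.no_110011 (-1)
        simp_all [move]
  no_110011 i h1 h2 h3 h4 h5 h6 := by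
    have hfar : i + 5 < -1 ∨ 1 < i := by
      have := hw.move_zero_adjacent_ones h0 h1 h2
      have := hw.move_zero_adjacent_ones h0 h5 (by rwa [add_assoc])
      omega
    simp (disch := omega) only [move_of_far] at h1 h2 h3 h4 h5 h6
    exact hw.no_110011 i h1 h2 h3 h4 h5 h6

theorem not_playable_move_zero_of_near (hw : Separated w) (h0 : Playable w 0) {v : ℤ}
    (hv : -1 ≤ v ∧ v ≤ 1) : ¬Playable (move w 0) v := by
  obtain ⟨hw0, hnb⟩ := h0
  have := hw.no_1011 (-2)
  have := hw.no_1101 (-1)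
  obtain rfl | rfl | rfl : v = -1 ∨ v = 0 ∨ v = 1 := by omega
  · cases h : w (-1) <;> simp_all [Playable, move]
  · simp [Playable, move, hw0]
  · cases h : w 1 <;> simp_all [Playable, move]

theorem not_playable_move_zero (hw : Separated w) (h0 : Playable w 0) {v : ℤ}
    (hv : ¬Playable w v) : ¬Playable (move w 0) v := by
  obtain hfar | hnear | rfl | rfl : (v < -2 ∨ 2 < v) ∨ (-1 ≤ v ∧ v ≤ 1) ∨ v = -2 ∨ v = 2 := by
    omega
  · simpa (disch := omega) only [Playable, move_of_far] using hv
  · exact not_playable_move_zero_of_near hw h0 hnear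
  · obtain ⟨hw0, hnb⟩ := h0
    have := hw.no_1011 (-2)
    cases h2 : w (-2) <;> rcases hnb with h | h <;> simp_all [Playable, move]
  · obtain ⟨hw0, hnb⟩ := h0
    have := hw.no_1101 (-1)
    cases h2 : w 2 <;> rcases hnb with h | h <;> simp_all [Playable, move]

variable {u : ℤ}

theorem playable_zero_comp_add (hu : Playable w u) : Playable (fun i => w (i + u)) 0 := by
  rwa [playable_comp_add, zero_add]

theorem Separated.move (hw : Separated w) (hu : Playable w u) : Separated (move w u) := by
  have h := (hw.comp_add u).move_zero (playable_zero_comp_add hu)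
  rw [move_comp_add] at h
  simpa using h.comp_add (-u)

theorem not_playable_move (hw : Separated w) (hu : Playable w u) {v : ℤ}
    (hv : ¬Playable w v) : ¬Playable (move w u) v := by
  have h := not_playable_move_zero (hw.comp_add u) (playable_zero_comp_add hu) (v := v - u)
    (by rwa [playable_comp_add, sub_add_cancel])
  rwa [move_comp_add, playable_comp_add, sub_add_cancel] at h

theorem not_playable_move_of_near (hw : Separated w) (hu : Playable w u) {v : ℤ}
    (hv : u - 1 ≤ v ∧ v ≤ u + 1) : ¬Playable (move w u) v := by
  have h := not_playable_move_zero_of_near (hw.comp_add u) (playable_zero_comp_add hu)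
    (v := v - u) (by omega)
  rwa [move_comp_add, playable_comp_add, sub_add_cancel] at h

variable {n : ℕ}

def Extends (w : ℤ → Bool) (ω : Fin n → Bool) : Prop :=
  ∀ i : Fin n, w (i : ℕ) = ω i

variable {ω : Fin n → Bool}

theorem Extends.move (h : Extends w ω) (v : Fin n) :
    Extends (Line.move w (v : ℕ)) (Toggle.move (pathGraph n) ω v) := by
  intro i
  simp [Line.move, Toggle.move, mem_closedNbhd_pathGraph, h i]

theorem Extends.playable (h : Extends w ω) (hn : 2 ≤ n) {v : Fin n}
    (hv : IsLegal (pathGraph n) ω v) : Playable w (v : ℕ) := by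
  obtain ⟨x, hx⟩ := exists_adj_pathGraph hn v
  obtain ⟨u, hvu, hu⟩ := exists_adj_of_isLegal hv hx
  refine ⟨by rw [h v]; exact hv.1, ?_⟩
  rcases pathGraph_adj.1 hvu with huv | huv
  · right
    rwa [show ((v : ℕ) : ℤ) + 1 = (u : ℕ) by omega, h u]
  · left
    rwa [show ((v : ℕ) : ℤ) - 1 = (u : ℕ) by omega, h u]

theorem Extends.reach {P : (ℤ → Bool) → Prop}
    (hP : ∀ w u, P w → Playable w u → P (Line.move w u)) (hn : 2 ≤ n) {ω' : Fin n → Bool}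
    (hreach : Reach (pathGraph n) ω ω') (hw : P w) (h : Extends w ω) :
    ∃ w', P w' ∧ Extends w' ω' := by
  induction hreach with
  | refl => exact ⟨w, hw, h⟩
  | tail _ hstep ih =>
    obtain ⟨u, hu, rfl⟩ := hstep
    obtain ⟨w', hw', h'⟩ := ih
    exact ⟨_, hP _ _ hw' (h'.playable hn hu), h'.move u⟩

end Line

end Toggle

/-- the path `P_n` with vertices `v_1, …, v_n` (here `v_j` is the vertex
`j - 1 : Fin n`), with initial weight 1 exactly on `v_{m1}, …, v_{m2}` where
`1 ≤ m1 < m2 ≤ n`, is penultimately unplayable. -/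
theorem statement2 (n m1 m2 : ℕ) (h1 : 1 ≤ m1) (h12 : m1 < m2) (h2n : m2 ≤ n) :
    Toggle.PenultimatelyUnplayable (Toggle.pathGraph n)
      (fun i => decide (m1 ≤ (i : ℕ) + 1 ∧ (i : ℕ) + 1 ≤ m2)) := by
  have hn : 2 ≤ n := by omega
  have hext : Toggle.Line.Extends (fun i => decide ((m1 : ℤ) - 1 ≤ i ∧ i ≤ m2 - 1))
      (fun i : Fin n => decide (m1 ≤ (i : ℕ) + 1 ∧ (i : ℕ) + 1 ≤ m2)) := fun i => by
    simp only [decide_eq_decide]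
    omega
  intro v ω' hreach u hu hlegal ω'' hreach2 hlegal2
  obtain ⟨w, hw, hwω⟩ := hext.reach (fun _ _ hs hp => hs.move hp) hn hreach
    (Toggle.Line.separated_interval _ _)
  have hwu := hwω.playable hn hlegal
  have huv : ((u : ℕ) : ℤ) - 1 ≤ (v : ℕ) ∧ ((v : ℕ) : ℤ) ≤ (u : ℕ) + 1 := by
    have := Toggle.mem_closedNbhd_pathGraph.1 hu
    omega
  obtain ⟨w', ⟨-, hv⟩, hw'ω⟩ := (hwω.move u).reach
    (P := fun w => Toggle.Line.Separated w ∧ ¬Toggle.Line.Playable w (v : ℕ))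
    (fun _ _ hs hp => ⟨hs.1.move hp, Toggle.Line.not_playable_move hs.1 hp hs.2⟩) hn hreach2
    ⟨hw.move hwu, Toggle.Line.not_playable_move_of_near hw hwu huv⟩
  exact hv (hw'ω.playable hn hlegal2)
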